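/- arXiv:1602.02792 — 2 statements merged into one kernel-verified Lean document; each statement's English description precedes it below -/
import Mathlib

section
/- Let (ν_t)_{t≥0} be any play distribution consistent with the memory-one strategy (σ_X^0[·], σ_X) of player X and the initial action σ_Y^0 of player Y in the strictly-alternating game in which Y moves first. Then for every bounded measurable function ψ : S_X → ℝ, the series ∑_{t=0}^∞ λ^{2t+1} ∫_{S_X×S_Y} [ψ(x) − λ² ∫_{S_X} ψ(s) dσ_X[x,y](s)] dν_t(x,y) converges and equals λ ∫_{S_Y} ∫_{S_X} ψ(s) dσ_X^0[y_0](s) dσ_Y^0(y_0). -/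
/-!
The marginal conditions say that `∫ ψ(x) dν_{t+1} = ∫∫ ψ dσ_X[x,y] dν_t`, and similarly for
`ν_0` with `σ_X^0` and `σ_Y^0`. Writing `I_t = ∫ ψ(x) dν_t`, the `t`-th summand is therefore
`λ (λ²)^t (I_t - λ² I_{t+1})`, so the series telescopes to `λ I_0`; the remainder
`(λ²)^t I_t` vanishes because `I_t` is bounded by the bound of `ψ`.
-/

open MeasureTheory ProbabilityTheory

theorem hasSum_pow_mul_sub_mul_succ {a : ℕ → ℝ} {r C : ℝ} (hr : |r| < 1)
    (ha : ∀ t, |a t| ≤ C) :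
    HasSum (fun t => r ^ t * (a t - r * a (t + 1))) (a 0) := by
  set f : ℕ → ℝ := fun t => r ^ t * a t
  have hf : Summable f := by
    refine Summable.of_norm_bounded
      ((summable_geometric_of_lt_one (abs_nonneg r) hr).mul_left C) fun t => ?_
    rw [Real.norm_eq_abs, abs_mul, abs_pow, mul_comm C]
    exact mul_le_mul_of_nonneg_left (ha t) (pow_nonneg (abs_nonneg r) t)
  have hshift : HasSum (fun t => f (t + 1)) (∑' t, f t - f 0) := by
    simpa using (hasSum_nat_add_iff' 1).mpr hf.hasSum
  have htelescope := hf.hasSum.sub hshift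
  rw [sub_sub_cancel, show f 0 = a 0 by simp [f]] at htelescope
  refine htelescope.congr_fun fun t => ?_
  simp only [f]
  ring

namespace MeasureTheory.Measure

variable {α β E : Type*} [MeasurableSpace α] [MeasurableSpace β]
  [NormedAddCommGroup E] [NormedSpace ℝ E]

theorem integral_comp {μ : Measure α} {κ : Kernel α β} {f : β → E} (hf : Integrable f (κ ∘ₘ μ)) :
    ∫ b, f b ∂(κ ∘ₘ μ) = ∫ a, ∫ b, f b ∂κ a ∂μ := by
  rw [comp_eq_comp_const_apply] at hf ⊢
  rw [Kernel.integral_comp hf, Kernel.const_apply]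

theorem fst_eq_comp_of_forall_prod_univ {μ : Measure α} {κ : Kernel α β} {γ : Type*}
    [MeasurableSpace γ] {ρ : Measure (β × γ)}
    (h : ∀ s : Set β, MeasurableSet s → ρ (s ×ˢ Set.univ) = ∫⁻ a, κ a s ∂μ) :
    ρ.fst = κ ∘ₘ μ := by
  ext s hs
  rw [fst_apply hs, ← Set.prod_univ, h s hs, bind_apply hs κ.aemeasurable]

theorem integral_fst_of_forall_prod_univ {μ : Measure α} {κ : Kernel α β} {γ : Type*}
    [MeasurableSpace γ] {ρ : Measure (β × γ)}
    (h : ∀ s : Set β, MeasurableSet s → ρ (s ×ˢ Set.univ) = ∫⁻ a, κ a s ∂μ)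
    {f : β → E} (hf : Integrable f ρ.fst) :
    ∫ q, f q.1 ∂ρ = ∫ a, ∫ b, f b ∂κ a ∂μ := by
  rw [← integral_map measurable_fst.aemeasurable hf.aestronglyMeasurable, ← fst,
    fst_eq_comp_of_forall_prod_univ h] at *
  exact integral_comp hf

end MeasureTheory.Measure

theorem abs_integral_le_of_abs_le {α : Type*} [MeasurableSpace α] {μ : Measure α}
    [IsProbabilityMeasure μ] {f : α → ℝ} {C : ℝ} (hf : ∀ x, |f x| ≤ C) :
    |∫ x, f x ∂μ| ≤ C := by
  have hf' : ∀ x, ‖f x‖ ≤ C := by simpa using hf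
  simpa using norm_integral_le_of_norm_le_const (μ := μ) (ae_of_all _ hf')

theorem stmt_4_general
    {SX SY : Type*} [MeasurableSpace SX] [MeasurableSpace SY]
    (lam : ℝ) (hlam0 : 0 < lam) (hlam1 : lam < 1)
    (σX0 : ProbabilityTheory.Kernel SY SX)
    (σX : ProbabilityTheory.Kernel (SX × SY) SX) [ProbabilityTheory.IsMarkovKernel σX]
    (σY0 : Measure SY)
    (ν : ℕ → Measure (SX × SY)) (hν : ∀ t, IsProbabilityMeasure (ν t))
    (hν0 : ∀ E : Set SX, MeasurableSet E →
      ν 0 (E ×ˢ (Set.univ : Set SY)) = ∫⁻ y0, σX0 y0 E ∂σY0)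
    (hνsucc : ∀ (t : ℕ) (E : Set SX), MeasurableSet E →
      ν (t + 1) (E ×ˢ (Set.univ : Set SY)) = ∫⁻ q, σX q E ∂(ν t))
    (ψ : SX → ℝ) (hψm : Measurable ψ) (C : ℝ) (hψb : ∀ s, |ψ s| ≤ C) :
    HasSum
      (fun t : ℕ => lam ^ (2 * t + 1) *
        ∫ q, (ψ q.1 - lam ^ 2 * ∫ s, ψ s ∂(σX q)) ∂(ν t))
      (lam * ∫ y0, (∫ s, ψ s ∂(σX0 y0)) ∂σY0) := by
  have hψb' : ∀ s, ‖ψ s‖ ≤ C := by simpa using hψb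
  have hψ : ∀ t, Integrable ψ (ν t).fst := fun t =>
    .of_bound hψm.aestronglyMeasurable C (ae_of_all _ hψb')
  set I : ℕ → ℝ := fun t => ∫ q, ψ q.1 ∂ν t
  have hI0 : I 0 = ∫ y0, ∫ s, ψ s ∂σX0 y0 ∂σY0 :=
    Measure.integral_fst_of_forall_prod_univ hν0 (hψ 0)
  have hIsucc (t : ℕ) : I (t + 1) = ∫ q, ∫ s, ψ s ∂σX q ∂ν t :=
    Measure.integral_fst_of_forall_prod_univ (hνsucc t) (hψ (t + 1))
  have hsummand (t : ℕ) : ∫ q, (ψ q.1 - lam ^ 2 * ∫ s, ψ s ∂σX q) ∂ν t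
      = I t - lam ^ 2 * I (t + 1) := by
    rw [integral_sub, integral_const_mul, hIsucc]
    · exact .of_bound (hψm.comp measurable_fst).aestronglyMeasurable C (ae_of_all _ (hψb' ·.1))
    · exact (Integrable.of_bound hψm.stronglyMeasurable.integral_kernel.aestronglyMeasurable C
        (ae_of_all _ fun q => by simpa using abs_integral_le_of_abs_le hψb)).const_mul _
  have hlam2 : |lam ^ 2| < 1 := by
    rw [abs_of_nonneg (sq_nonneg lam)]
    nlinarith
  have htelescope := (hasSum_pow_mul_sub_mul_succ hlam2
    fun t => abs_integral_le_of_abs_le (μ := ν t) (hψb ·.1)).mul_left lam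
  rw [← hI0]
  refine htelescope.congr_fun fun t => ?_
  rw [hsummand, pow_succ, pow_mul]
  ring

/-- For any play distribution `ν` consistent with the memory-one strategy
`(σX0[·], σX)` of player `X` and the initial action `σY0` of player `Y` in the
strictly-alternating game in which `Y` moves first, and any bounded measurable
`ψ : S_X → ℝ`, the series `∑ λ^{2t+1} ∫ [ψ(x) − λ² ∫ ψ dσX[x,y]] dν_t`
converges to `λ ∫∫ ψ dσX0[y₀] dσY0(y₀)`. -/
theorem stmt_4
    {SX SY : Type*} [MeasurableSpace SX] [MeasurableSpace SY]
    (lam : ℝ) (hlam0 : 0 < lam) (hlam1 : lam < 1)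
    (σX0 : ProbabilityTheory.Kernel SY SX) [ProbabilityTheory.IsMarkovKernel σX0]
    (σX : ProbabilityTheory.Kernel (SX × SY) SX) [ProbabilityTheory.IsMarkovKernel σX]
    (σY0 : Measure SY) [IsProbabilityMeasure σY0]
    (ν : ℕ → Measure (SX × SY)) (hν : ∀ t, IsProbabilityMeasure (ν t))
    (hν0 : ∀ E : Set SX, MeasurableSet E →
      ν 0 (E ×ˢ (Set.univ : Set SY)) = ∫⁻ y0, σX0 y0 E ∂σY0)
    (hνsucc : ∀ (t : ℕ) (E : Set SX), MeasurableSet E →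
      ν (t + 1) (E ×ˢ (Set.univ : Set SY)) = ∫⁻ q, σX q E ∂(ν t))
    (ψ : SX → ℝ) (hψm : Measurable ψ) (C : ℝ) (hψb : ∀ s, |ψ s| ≤ C) :
    HasSum
      (fun t : ℕ => lam ^ (2 * t + 1) *
        ∫ q, (ψ q.1 - lam ^ 2 * ∫ s, ψ s ∂(σX q)) ∂(ν t))
      (lam * ∫ y0, (∫ s, ψ s ∂(σX0 y0)) ∂σY0) :=
  stmt_4_general lam hlam0 hlam1 σX0 σX σY0 ν hν hν0 hνsucc ψ hψm C hψb
end

section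
/- Let (ν_t)_{t≥0} be any play distribution consistent with the memory-one strategy (σ_X^0, σ_X) of player X in the randomly-alternating game with move probability ω_X. Then for every measurable set E ⊆ S_X, the series ∑_{t=0}^∞ λ^t ∫_{S_X ⊔ S_Y} [1_E(s) − λ ω_X · σ_X[s](E)] dν_t(s) converges and equals ω_X σ_X^0(E), where 1_E is the indicator of the subset of S_X ⊔ S_Y corresponding to E ⊆ S_X. -/
/-!
With `a t = ν_t(inl '' E)`, consistency says `ω_X ∫ σ_X[s](E) dν_t = a (t + 1)`, so the `t`-th term
of the series is `λ^t a t - λ^(t+1) a (t + 1)`. Since `0 ≤ a t ≤ 1`, the sequence `λ^t a t` is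
summable and the series telescopes to `a 0 = ω_X σ_X^0(E)`.
-/

open MeasureTheory ProbabilityTheory

theorem Summable.hasSum_sub_succ {G : Type*} [AddCommGroup G] [TopologicalSpace G]
    [IsTopologicalAddGroup G] [T2Space G] {g : ℕ → G} (hg : Summable g) :
    HasSum (fun t => g t - g (t + 1)) (g 0) := by
  have hdiff : Summable fun t => g t - g (t + 1) := hg.sub ((summable_nat_add_iff 1).mpr hg)
  rw [hdiff.hasSum_iff_tendsto_nat]
  simp only [Finset.sum_range_sub']
  simpa using tendsto_const_nhds.sub hg.tendsto_atTop_zero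

theorem integral_toReal_kernel_apply {α β : Type*} [MeasurableSpace α] [MeasurableSpace β]
    (μ : Measure α) [IsFiniteMeasure μ] (κ : Kernel α β) [IsMarkovKernel κ]
    {E : Set β} (hE : MeasurableSet E) :
    ∫ s, (κ s E).toReal ∂μ = (κ ∘ₘ μ).real E := by
  rw [integral_toReal (κ.measurable_coe hE).aemeasurable (ae_of_all _ fun s => measure_lt_top _ _),
    measureReal_def, Measure.bind_apply hE κ.aemeasurable]

theorem integral_indicator_one_sub_mul_kernel_apply {α β : Type*} [MeasurableSpace α]
    [MeasurableSpace β] (μ : Measure α) [IsFiniteMeasure μ] (κ : Kernel α β) [IsMarkovKernel κ]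
    {A : Set α} (hA : MeasurableSet A) {E : Set β} (hE : MeasurableSet E) (c : ℝ) :
    ∫ s, A.indicator (fun _ => (1 : ℝ)) s - c * (κ s E).toReal ∂μ
      = μ.real A - c * (κ ∘ₘ μ).real E := by
  have hκE : Integrable (fun s => (κ s E).toReal) μ :=
    .of_bound (κ.measurable_coe hE).ennreal_toReal.aestronglyMeasurable 1
      (ae_of_all _ fun s => by
        rw [Real.norm_of_nonneg ENNReal.toReal_nonneg]
        exact measureReal_le_one)
  rw [integral_sub ((integrable_const 1).indicator hA) (hκE.const_mul c),
    integral_indicator_const 1 hA, integral_const_mul, integral_toReal_kernel_apply μ κ hE,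
    smul_eq_mul, mul_one]

theorem stmt_6_general
    {SX SY : Type*} [MeasurableSpace SX] [MeasurableSpace SY]
    (lam : ℝ) (hlam0 : 0 < lam) (hlam1 : lam < 1)
    (ωX : ℝ) (hω0 : 0 ≤ ωX)
    (σX0 : Measure SX)
    (σX : ProbabilityTheory.Kernel (SX ⊕ SY) SX) [ProbabilityTheory.IsMarkovKernel σX]
    (ν : ℕ → Measure (SX ⊕ SY)) (hν : ∀ t, IsProbabilityMeasure (ν t))
    (hν0 : ∀ E : Set SX, MeasurableSet E →
      ν 0 (Sum.inl '' E) = ENNReal.ofReal ωX * σX0 E)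
    (hνsucc : ∀ (t : ℕ) (E : Set SX), MeasurableSet E →
      ν (t + 1) (Sum.inl '' E) = ENNReal.ofReal ωX * ∫⁻ s, σX s E ∂(ν t))
    (E : Set SX) (hE : MeasurableSet E) :
    HasSum
      (fun t : ℕ => lam ^ t *
        ∫ s, ((Sum.inl '' E : Set (SX ⊕ SY)).indicator (fun _ => (1 : ℝ)) s
          - lam * ωX * ((σX s) E).toReal) ∂(ν t))
      (ωX * (σX0 E).toReal) := by
  set g : ℕ → ℝ := fun t => lam ^ t * (ν t).real (Sum.inl '' E)
  have hnext : ∀ t, (ν (t + 1)).real (Sum.inl '' E) = ωX * (σX ∘ₘ ν t).real E := fun t => by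
    rw [measureReal_def, hνsucc t E hE, ← Measure.bind_apply hE σX.aemeasurable,
      ENNReal.toReal_mul, ENNReal.toReal_ofReal hω0]
    rfl
  have htelescope : ∀ t, lam ^ t * ∫ s, (Sum.inl '' E : Set (SX ⊕ SY)).indicator (fun _ => 1) s
      - lam * ωX * (σX s E).toReal ∂(ν t) = g t - g (t + 1) := fun t => by
    rw [integral_indicator_one_sub_mul_kernel_apply (ν t) σX hE.inl_image hE]
    simp only [g, hnext]
    ring
  have hg : Summable g :=
    .of_nonneg_of_le (fun t => by positivity)
      (fun t => mul_le_of_le_one_right (by positivity) measureReal_le_one)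
      (summable_geometric_of_lt_one hlam0.le hlam1)
  have hg0 : g 0 = ωX * (σX0 E).toReal := by
    simp only [g, pow_zero, one_mul, measureReal_def, hν0 E hE, ENNReal.toReal_mul,
      ENNReal.toReal_ofReal hω0]
  simpa only [htelescope, hg0] using hg.hasSum_sub_succ

/-- Akin-type lemma for randomly-alternating games: for any play distribution
`ν` consistent with the memory-one strategy `(σX0, σX)` of player `X` (who
moves with probability `ωX` in each round) and any measurable `E ⊆ S_X`, the
series `∑ λ^t ∫ [1_E(s) − λ ωX σX[s](E)] dν_t` converges to `ωX σX0(E)`. -/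
theorem stmt_6
    {SX SY : Type*} [MeasurableSpace SX] [MeasurableSpace SY]
    (lam : ℝ) (hlam0 : 0 < lam) (hlam1 : lam < 1)
    (ωX : ℝ) (hω0 : 0 ≤ ωX) (hω1 : ωX ≤ 1)
    (σX0 : Measure SX) [IsProbabilityMeasure σX0]
    (σX : ProbabilityTheory.Kernel (SX ⊕ SY) SX) [ProbabilityTheory.IsMarkovKernel σX]
    (ν : ℕ → Measure (SX ⊕ SY)) (hν : ∀ t, IsProbabilityMeasure (ν t))
    (hν0 : ∀ E : Set SX, MeasurableSet E →
      ν 0 (Sum.inl '' E) = ENNReal.ofReal ωX * σX0 E)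
    (hνsucc : ∀ (t : ℕ) (E : Set SX), MeasurableSet E →
      ν (t + 1) (Sum.inl '' E) = ENNReal.ofReal ωX * ∫⁻ s, σX s E ∂(ν t))
    (E : Set SX) (hE : MeasurableSet E) :
    HasSum
      (fun t : ℕ => lam ^ t *
        ∫ s, ((Sum.inl '' E : Set (SX ⊕ SY)).indicator (fun _ => (1 : ℝ)) s
          - lam * ωX * ((σX s) E).toReal) ∂(ν t))
      (ωX * (σX0 E).toReal) :=
  stmt_6_general lam hlam0 hlam1 ωX hω0 σX0 σX ν hν hν0 hνsucc E hE
end
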